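/- Let n ≥ 2 be an integer and let (ξ_i)_{i≥1} be i.i.d. random variables with the Binomial(n, 1/n) distribution. Set S_0 = 1 and S_t = 1 + Σ_{i=1}^{t}(ξ_i − 1), fix an integer H with 2 ≤ H ≤ n − 3, let γ = min{t ≥ 1 : S_t ≥ H or S_t = 0}, and let γ* = min(γ, H²). Then for every c ∈ (0,1), E[e^{c·S_{γ*}} | S_{γ*} > 0] ≤ exp(c·H + c + c²). -/

import Mathlib

open MeasureTheory ProbabilityTheory
open scoped ENNReal

/-- The Binomial(n,p) distribution, as a measure on `ℕ`. -/
noncomputable def binomialMeasure (n : ℕ) (p : ℝ) : Measure ℕ :=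
  Measure.sum fun k : ℕ =>
    (ENNReal.ofReal ((n.choose k : ℝ) * p ^ k * (1 - p) ^ (n - k))) • Measure.dirac k

/-- The random walk `S_t = 1 + ∑_{i=1}^t (ξ_i - 1)`. -/
def walk {Ω : Type*} (ξ : ℕ → Ω → ℕ) (t : ℕ) (ω : Ω) : ℤ :=
  1 + ∑ i ∈ Finset.Icc 1 t, ((ξ i ω : ℤ) - 1)

/-- The stopping time `γ = min {t ≥ 1 : S_t ≥ H or S_t = 0}`. -/
noncomputable def hitTime {Ω : Type*} (ξ : ℕ → Ω → ℕ) (H : ℕ) (ω : Ω) : ℕ :=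
  sInf {t | 1 ≤ t ∧ ((H : ℤ) ≤ walk ξ t ω ∨ walk ξ t ω = 0)}

/-!
On `{S_{γ*} < H}` the integrand is at most `e^{cH}`. The event `{S_{γ*} ≥ H}` is the disjoint
union, over `t < H²` and `0 < s < H`, of the events "the walk stays in `(0, H)` up to time `t`,
sits at `s` at time `t`, and `ξ_{t+1} ≥ H + 1 - s`". The first two conditions only involve
`ξ_1, …, ξ_t`, so they are independent of `ξ_{t+1}`, and on each piece it remains to bound
`E[e^{cξ} | ξ ≥ a]` for `ξ ~ Binomial(n, 1/n)` and `a = H + 1 - s ≥ 2`. The binomial masses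
satisfy `(k + 1) q_{k+1} ≤ q_k` for `k ≥ 1`, so `q_{a+1+j} ≤ q_a / (3 · 4ʲ)`, and for `c ≤ 1`
this gives `E[e^{cξ} | ξ ≥ a] ≤ e^{c(a + 1)}`, hence
`E[e^{c S_{γ*}}; S_{γ*} ≥ H] ≤ e^{c(H + 1)} P(S_{γ*} ≥ H)`.
-/

open Finset Function

section RatioDecay

variable {q : ℕ → ℝ}

theorem sum_range_le_of_four_mul_succ_le (hq : ∀ j, 0 ≤ q j) (hdec : ∀ j, 4 * q (j + 1) ≤ q j)
    (N : ℕ) : ∑ j ∈ range N, q j ≤ 4 / 3 * q 0 := by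
  induction N generalizing q with
  | zero => simpa using hq 0
  | succ N ih =>
    rw [sum_range_succ']
    linarith [ih (fun j => hq (j + 1)) (fun j => hdec (j + 1)), hdec 0]

theorem sum_range_pow_mul_le_of_four_mul_succ_le {x : ℝ} (hx1 : 1 ≤ x) (hx4 : x < 4)
    (hq : ∀ j, 0 ≤ q j) (hdec : ∀ j, 4 * q (j + 1) ≤ q j) (N : ℕ) :
    ∑ j ∈ range N, x ^ j * q j ≤ 3 / (4 - x) * ∑ j ∈ range N, q j := by
  induction N generalizing q with
  | zero => simp
  | succ N ih =>
    simp only [sum_range_succ', pow_succ', pow_zero, one_mul, mul_assoc, ← mul_sum]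
    set r := 3 / (4 - x)
    set T := ∑ j ∈ range N, x ^ j * q (j + 1)
    set U := ∑ j ∈ range N, q (j + 1)
    have hr : r * (4 - x) = 3 := div_mul_cancel₀ _ (by linarith)
    have hr0 : 0 ≤ r := div_nonneg (by norm_num) (by linarith)
    have hT : T ≤ r * U := ih (fun j => hq (j + 1)) (fun j => hdec (j + 1))
    have hU : U ≤ q 0 / 3 := by
      linarith [sum_range_le_of_four_mul_succ_le (fun j => hq (j + 1)) (fun j => hdec (j + 1)) N,
        hdec 0]
    have hslack : 0 ≤ r * (x - 1) * (q 0 / 3 - U) :=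
      mul_nonneg (mul_nonneg hr0 (by linarith)) (by linarith)
    have hr' : r * (4 - x) * q 0 = 3 * q 0 := by rw [hr]
    nlinarith [mul_le_mul_of_nonneg_left hT (by linarith : (0 : ℝ) ≤ x)]

-- `36 / 13` is the root of `4 x = 9 (4 - x)`; it exceeds `e`.
theorem sum_range_pow_mul_le_mul_sum {x : ℝ} (hx1 : 1 ≤ x) (hx : x ≤ 36 / 13)
    (hq : ∀ j, 0 ≤ q j) (hdec : ∀ j : ℕ, ((j : ℝ) + 3) * q (j + 1) ≤ q j) (N : ℕ) :
    ∑ j ∈ range N, x ^ j * q j ≤ x * ∑ j ∈ range N, q j := by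
  cases N with
  | zero => simp
  | succ N =>
    have hdec4 : ∀ j, 4 * q (j + 1 + 1) ≤ q (j + 1) := fun j => by
      have := hdec (j + 1)
      push_cast at this
      nlinarith [hq (j + 1 + 1), (j.cast_nonneg : (0 : ℝ) ≤ j)]
    simp only [sum_range_succ', pow_succ', pow_zero, one_mul, mul_assoc, ← mul_sum]
    set r := 3 / (4 - x)
    set T := ∑ j ∈ range N, x ^ j * q (j + 1)
    set U := ∑ j ∈ range N, q (j + 1)
    have hr : r * (4 - x) = 3 := div_mul_cancel₀ _ (by linarith)
    have hr0 : 0 ≤ r := div_nonneg (by norm_num) (by linarith)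
    have hT : T ≤ r * U :=
      sum_range_pow_mul_le_of_four_mul_succ_le hx1 (by linarith) (fun j => hq (j + 1)) hdec4 N
    have hU : U ≤ 4 / 9 * q 0 := by
      linarith [sum_range_le_of_four_mul_succ_le (fun j => hq (j + 1)) hdec4 N,
        (by simpa using hdec 0 : 3 * q 1 ≤ q 0)]
    have hslack : 0 ≤ (x - 1) * ((4 - x) * q 0 - x * U) :=
      mul_nonneg (by linarith) (by nlinarith [hq 0])
    have hr' : r * (4 - x) * (x * U) = 3 * (x * U) := by rw [hr]
    nlinarith [mul_le_mul_of_nonneg_left hT (by linarith : (0 : ℝ) ≤ x)]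

end RatioDecay

section Binomial

variable {n : ℕ} {p : ℝ}

noncomputable def binomialMass (n : ℕ) (p : ℝ) (k : ℕ) : ℝ :=
  (n.choose k : ℝ) * p ^ k * (1 - p) ^ (n - k)

theorem binomialMass_nonneg (hp0 : 0 ≤ p) (hp1 : p ≤ 1) (k : ℕ) : 0 ≤ binomialMass n p k := by
  unfold binomialMass
  have : 0 ≤ 1 - p := by linarith
  positivity

theorem binomialMass_eq_zero_of_lt {k : ℕ} (hk : n < k) : binomialMass n p k = 0 := by
  simp [binomialMass, Nat.choose_eq_zero_of_lt hk]

theorem succ_mul_binomialMass_succ_le (hp0 : 0 ≤ p) (hp1 : p ≤ 1) (hnp : n * p ≤ 1) {k : ℕ}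
    (hk : 1 ≤ k) : ((k : ℝ) + 1) * binomialMass n p (k + 1) ≤ binomialMass n p k := by
  rcases lt_or_ge k n with hkn | hnk
  · obtain ⟨m, rfl⟩ : ∃ m, n = k + 1 + m := ⟨n - (k + 1), by omega⟩
    have hchoose :
        ((k + 1 + m).choose (k + 1) : ℝ) * (k + 1) = ((k + 1 + m).choose k) * (m + 1) := by
      exact_mod_cast (Nat.choose_succ_right_eq (k + 1 + m) k).trans (by congr 1; omega)
    have hstep : ((m : ℝ) + 1) * p ≤ 1 - p := by
      have : (k : ℝ) ≥ 1 := by exact_mod_cast hk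
      push_cast at hnp
      nlinarith
    have hw : 0 ≤ ((k + 1 + m).choose k : ℝ) * p ^ k * (1 - p) ^ m := by
      have : 0 ≤ 1 - p := by linarith
      positivity
    simp only [binomialMass, show k + 1 + m - (k + 1) = m by omega,
      show k + 1 + m - k = m + 1 by omega]
    calc ((k : ℝ) + 1) * (((k + 1 + m).choose (k + 1) : ℝ) * p ^ (k + 1) * (1 - p) ^ m)
        = (((k + 1 + m).choose k : ℝ) * p ^ k * (1 - p) ^ m) * ((m + 1) * p) := by
          rw [pow_succ]; linear_combination (p ^ k * p * (1 - p) ^ m) * hchoose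
      _ ≤ (((k + 1 + m).choose k : ℝ) * p ^ k * (1 - p) ^ m) * (1 - p) :=
          mul_le_mul_of_nonneg_left hstep hw
      _ = _ := by ring
  · rw [binomialMass_eq_zero_of_lt (by omega), mul_zero]
    exact binomialMass_nonneg hp0 hp1 k

theorem lintegral_binomialMeasure (g : ℕ → ℝ≥0∞) :
    ∫⁻ k, g k ∂binomialMeasure n p =
      ∑ k ∈ range (n + 1), ENNReal.ofReal (binomialMass n p k) * g k := by
  simp only [binomialMeasure, lintegral_sum_measure, lintegral_smul_measure, lintegral_dirac,
    smul_eq_mul]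
  exact tsum_eq_sum fun k hk => by
    rw [← binomialMass, binomialMass_eq_zero_of_lt (by simpa using hk), ENNReal.ofReal_zero,
      zero_mul]

theorem sum_Ico_exp_mul_binomialMass_le (hp0 : 0 ≤ p) (hp1 : p ≤ 1) (hnp : n * p ≤ 1) {a : ℕ}
    (ha : 2 ≤ a) {c : ℝ} (hc0 : 0 ≤ c) (hc1 : c ≤ 1) :
    ∑ k ∈ Ico a (n + 1), Real.exp (c * k) * binomialMass n p k ≤
      Real.exp (c * (a + 1)) * ∑ k ∈ Ico a (n + 1), binomialMass n p k := by
  have hx : Real.exp c ≤ 36 / 13 :=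
    (Real.exp_le_exp.2 hc1).trans (Real.exp_one_lt_d9.le.trans (by norm_num))
  have hdec : ∀ j : ℕ, ((j : ℝ) + 3) * binomialMass n p (a + (j + 1)) ≤ binomialMass n p (a + j) :=
    fun j => by
      have h := succ_mul_binomialMass_succ_le hp0 hp1 hnp (k := a + j) (by omega)
      have : (j : ℝ) + 3 ≤ ((a + j : ℕ) : ℝ) + 1 := by exact_mod_cast (by omega : j + 3 ≤ a + j + 1)
      exact (mul_le_mul_of_nonneg_right this (binomialMass_nonneg hp0 hp1 _)).trans h
  have key := sum_range_pow_mul_le_mul_sum (Real.one_le_exp hc0) hx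
    (fun j => binomialMass_nonneg hp0 hp1 (a + j)) hdec (n + 1 - a)
  rw [sum_Ico_eq_sum_range, sum_Ico_eq_sum_range]
  calc ∑ j ∈ range (n + 1 - a), Real.exp (c * ((a + j : ℕ) : ℝ)) * binomialMass n p (a + j)
      = Real.exp (c * a) * ∑ j ∈ range (n + 1 - a), Real.exp c ^ j * binomialMass n p (a + j) := by
        rw [mul_sum]
        refine sum_congr rfl fun j _ => ?_
        rw [← Real.exp_nat_mul, ← mul_assoc, ← Real.exp_add]
        push_cast; ring_nf
    _ ≤ Real.exp (c * a) * (Real.exp c * ∑ j ∈ range (n + 1 - a), binomialMass n p (a + j)) :=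
        mul_le_mul_of_nonneg_left key (Real.exp_pos _).le
    _ = _ := by rw [← mul_assoc, ← Real.exp_add]; ring_nf

theorem setLIntegral_exp_binomialMeasure_Ici_le (hp0 : 0 ≤ p) (hp1 : p ≤ 1) (hnp : n * p ≤ 1)
    {a : ℕ} (ha : 2 ≤ a) {c : ℝ} (hc0 : 0 ≤ c) (hc1 : c ≤ 1) :
    ∫⁻ k in Set.Ici a, ENNReal.ofReal (Real.exp (c * k)) ∂binomialMeasure n p ≤
      ENNReal.ofReal (Real.exp (c * (a + 1))) * binomialMeasure n p (Set.Ici a) := by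
  have hIco : ∀ g : ℕ → ℝ≥0∞, ∑ k ∈ range (n + 1), ENNReal.ofReal (binomialMass n p k) *
      (Set.Ici a).indicator g k = ∑ k ∈ Ico a (n + 1), ENNReal.ofReal (binomialMass n p k) * g k :=
    fun g => by
      simp only [Set.indicator_apply, Set.mem_Ici, mul_ite, mul_zero, ← sum_filter]
      congr 1; ext k; simp; omega
  rw [← lintegral_indicator measurableSet_Ici, ← lintegral_indicator_one measurableSet_Ici,
    lintegral_binomialMeasure, lintegral_binomialMeasure, hIco, hIco]
  have hm := binomialMass_nonneg (n := n) hp0 hp1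
  simp only [Pi.one_apply, mul_one, ← ENNReal.ofReal_mul (hm _)]
  rw [← ENNReal.ofReal_sum_of_nonneg (fun k _ => hm k), ← ENNReal.ofReal_sum_of_nonneg
    (fun k _ => mul_nonneg (hm k) (Real.exp_pos _).le), ← ENNReal.ofReal_mul (Real.exp_pos _).le]
  refine ENNReal.ofReal_le_ofReal ?_
  simpa only [mul_comm (binomialMass n p _)] using
    sum_Ico_exp_mul_binomialMass_le hp0 hp1 hnp ha hc0 hc1

end Binomial

theorem setLIntegral_inter_preimage_eq_mul_of_iIndepFun {Ω ι β : Type*} [mΩ : MeasurableSpace Ω]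
    [mβ : MeasurableSpace β] {μ : Measure Ω} {X : ι → Ω → β} (hX : ∀ i, Measurable (X i))
    (hindep : iIndepFun X μ) {S : Set ι} {j : ι} (hj : j ∉ S) {G : Set Ω}
    (hG : MeasurableSet[⨆ i ∈ S, mβ.comap (X i)] G) {B : Set β} (hB : MeasurableSet B)
    {h : β → ℝ≥0∞} (hh : Measurable h) :
    ∫⁻ ω in G ∩ X j ⁻¹' B, h (X j ω) ∂μ = μ G * ∫⁻ x in B, h x ∂μ.map (X j) := by
  have hle : ⨆ i ∈ S, mβ.comap (X i) ≤ mΩ := iSup₂_le fun i _ => (hX i).comap_le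
  have hind := indep_iSup_of_disjoint (fun i => (hX i).comap_le)
    ((iIndepFun_iff_iIndep _ _ _).1 hindep) (Set.disjoint_singleton_right.2 hj)
  rw [_root_.iSup_singleton] at hind
  have hGf : Measurable[⨆ i ∈ S, mβ.comap (X i)] (G.indicator (1 : Ω → ℝ≥0∞)) :=
    Measurable.indicator (m := ⨆ i ∈ S, mβ.comap (X i)) measurable_const hG
  have hBf : Measurable[mβ.comap (X j)] fun ω => B.indicator h (X j ω) :=
    (hh.indicator hB).comp (Measurable.of_comap_le le_rfl)
  have hsplit : (G ∩ X j ⁻¹' B).indicator (fun ω => h (X j ω)) =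
      fun ω => G.indicator 1 ω * B.indicator h (X j ω) := by
    ext ω
    by_cases hω : ω ∈ G <;> by_cases hω' : X j ω ∈ B <;> simp [hω, hω']
  rw [← lintegral_indicator ((hle G hG).inter (hX j hB)), hsplit,
    lintegral_mul_eq_lintegral_mul_lintegral_of_independent_measurableSpace hle (hX j).comap_le
      hind hGf hBf, lintegral_indicator_one (hle G hG), ← lintegral_indicator hB,
    lintegral_map (hh.indicator hB) (hX j)]

theorem integral_cond_le_of_setLIntegral_le {Ω : Type*} [MeasurableSpace Ω] {μ : Measure Ω}
    {A : Set Ω} {f : Ω → ℝ} (hf : ∀ ω, 0 ≤ f ω) {E : ℝ} (hE : 0 ≤ E)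
    (h : ∫⁻ ω in A, ENNReal.ofReal (f ω) ∂μ ≤ ENNReal.ofReal E * μ A) :
    ∫ ω, f ω ∂μ[|A] ≤ E := by
  by_cases hi : Integrable f μ[|A]
  · rw [← ENNReal.ofReal_le_ofReal_iff hE, ofReal_integral_eq_lintegral_ofReal hi (ae_of_all _ hf),
      ProbabilityTheory.cond, lintegral_smul_measure, smul_eq_mul]
    calc (μ A)⁻¹ * ∫⁻ ω in A, ENNReal.ofReal (f ω) ∂μ ≤ (μ A)⁻¹ * (ENNReal.ofReal E * μ A) := by
          gcongr
      _ = ENNReal.ofReal E * ((μ A)⁻¹ * μ A) := by ring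
      _ ≤ ENNReal.ofReal E := mul_le_of_le_one_right' (ENNReal.inv_mul_le_one _)
  · rw [integral_undef hi]
    exact hE

section Walk

variable {Ω : Type*} {ξ : ℕ → Ω → ℕ} {H t s : ℕ} {ω : Ω}

theorem walk_zero (ξ : ℕ → Ω → ℕ) (ω : Ω) : walk ξ 0 ω = 1 := by
  simp [walk]

theorem walk_succ (ξ : ℕ → Ω → ℕ) (t : ℕ) (ω : Ω) :
    walk ξ (t + 1) ω = walk ξ t ω + ξ (t + 1) ω - 1 := by
  rw [walk, walk, sum_Icc_succ_top (by omega)]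
  ring

theorem measurable_walk {m : MeasurableSpace Ω} (hξ : ∀ i ≤ t, Measurable[m] (ξ i)) :
    Measurable[m] (walk ξ t) :=
  measurable_const.add <| Finset.measurable_sum _ fun i hi =>
    (measurable_of_countable fun k : ℕ => (k : ℤ) - 1).comp (hξ i (mem_Icc.1 hi).2)

-- Steps are at least `-1`, so the walk cannot skip over `0`.
theorem walk_pos_of_ne_zero (h : ∀ u ∈ Icc 1 t, walk ξ u ω ≠ 0) : ∀ u ≤ t, 0 < walk ξ u ω := by
  intro u hu
  induction u with
  | zero => simp [walk_zero]
  | succ u ih =>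
    have := h (u + 1) (mem_Icc.2 ⟨by omega, hu⟩)
    rw [walk_succ] at this ⊢
    have := ih (by omega)
    omega

theorem hitTime_eq (ht : 1 ≤ t) (hexit : (H : ℤ) ≤ walk ξ t ω ∨ walk ξ t ω = 0)
    (hstay : ∀ u, 1 ≤ u → u < t → walk ξ u ω ≠ 0 ∧ walk ξ u ω < H) : hitTime ξ H ω = t :=
  le_antisymm (Nat.sInf_le ⟨ht, hexit⟩) <| le_csInf ⟨t, ht, hexit⟩ fun u ⟨hu, hexit'⟩ => by
    by_contra! hut
    have := hstay u hu hut
    omega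

def survivesAt (ξ : ℕ → Ω → ℕ) (H t s : ℕ) : Set Ω :=
  (⋂ u ∈ Icc 1 t, walk ξ u ⁻¹' Set.Ioo 0 (H : ℤ)) ∩ walk ξ t ⁻¹' {(s : ℤ)}

theorem measurableSet_survivesAt {m : MeasurableSpace Ω} (hξ : ∀ i ≤ t, Measurable[m] (ξ i)) :
    MeasurableSet[m] (survivesAt ξ H t s) :=
  (Finset.measurableSet_biInter _ fun _ hu => measurable_walk
      (fun i hi => hξ i (hi.trans (mem_Icc.1 hu).2)) measurableSet_Ioo).inter
    (measurable_walk hξ (measurableSet_singleton _))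

def overshootEvent (ξ : ℕ → Ω → ℕ) (H t s : ℕ) : Set Ω :=
  survivesAt ξ H t s ∩ ξ (t + 1) ⁻¹' Set.Ici (H + 1 - s)

theorem walk_succ_of_mem_overshootEvent (hω : ω ∈ overshootEvent ξ H t s) :
    walk ξ (t + 1) ω = s + ξ (t + 1) ω - 1 := by
  rw [walk_succ, hω.1.2]

theorem hitTime_eq_of_mem_overshootEvent (hω : ω ∈ overshootEvent ξ H t s) :
    hitTime ξ H ω = t + 1 := by
  have hX := walk_succ_of_mem_overshootEvent hω
  obtain ⟨⟨hstay, -⟩, hk⟩ := hω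
  simp only [Set.mem_iInter, Set.mem_preimage, Set.mem_Ioo, mem_Icc] at hstay
  simp only [Set.mem_preimage, Set.mem_Ici] at hk
  refine hitTime_eq (by omega) (Or.inl (by omega)) fun u hu hut => ?_
  have := hstay u ⟨hu, by omega⟩
  omega

theorem pairwise_disjoint_overshootEvent :
    Pairwise (Disjoint on fun p : ℕ × ℕ => overshootEvent ξ H p.1 p.2) := by
  rintro ⟨t, s⟩ ⟨t', s'⟩ hne
  refine Set.disjoint_left.2 fun ω h h' => hne ?_
  have ht : t = t' := by
    simpa using
      (hitTime_eq_of_mem_overshootEvent h).symm.trans (hitTime_eq_of_mem_overshootEvent h')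
  subst ht
  have hs : (s : ℤ) = s' := h.1.2.symm.trans h'.1.2
  simp_all

theorem measurableSet_overshootEvent [MeasurableSpace Ω] (hξ : ∀ i, Measurable (ξ i)) :
    MeasurableSet (overshootEvent ξ H t s) :=
  (measurableSet_survivesAt fun i _ => hξ i).inter (hξ _ measurableSet_Ici)

/-- `S_{γ*}` with `γ* = min γ H²`. -/
noncomputable def stoppedWalk (ξ : ℕ → Ω → ℕ) (H : ℕ) (ω : Ω) : ℤ :=
  walk ξ (min (hitTime ξ H ω) (H ^ 2)) ω

theorem exists_mem_overshootEvent (hH : 2 ≤ H) (hX : (H : ℤ) ≤ stoppedWalk ξ H ω) :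
    ∃ t < H ^ 2, ∃ s ∈ Ioo 0 H, ω ∈ overshootEvent ξ H t s := by
  unfold stoppedWalk at hX
  have hne : {u | 1 ≤ u ∧ ((H : ℤ) ≤ walk ξ u ω ∨ walk ξ u ω = 0)}.Nonempty := by
    by_contra hempty
    rw [Set.not_nonempty_iff_eq_empty] at hempty
    rw [hitTime, hempty, Nat.sInf_empty, Nat.zero_min, walk_zero] at hX
    omega
  have hγ1 : 1 ≤ hitTime ξ H ω := (Nat.sInf_mem hne).1
  have hbefore : ∀ u, 1 ≤ u → u < hitTime ξ H ω → walk ξ u ω ≠ 0 ∧ walk ξ u ω < H :=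
    fun u hu hlt => by
      have := Nat.notMem_of_lt_sInf hlt
      simp only [Set.mem_ofPred_eq, not_and, not_or] at this
      have := this hu
      omega
  have hγH : hitTime ξ H ω ≤ H ^ 2 := by
    by_contra! hlt
    rw [min_eq_right hlt.le] at hX
    have := hbefore (H ^ 2) (Nat.one_le_pow _ _ (by omega)) hlt
    omega
  obtain ⟨t, ht⟩ : ∃ t, hitTime ξ H ω = t + 1 := ⟨hitTime ξ H ω - 1, by omega⟩
  rw [min_eq_left hγH, ht, walk_succ] at hX
  have hpos := walk_pos_of_ne_zero (t := t) fun u hu => (hbefore u (mem_Icc.1 hu).1 (by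
    have := (mem_Icc.1 hu).2; omega)).1
  have hst : walk ξ t ω < H := by
    rcases Nat.eq_zero_or_pos t with rfl | ht0
    · rw [walk_zero]; omega
    · exact (hbefore t ht0 (by omega)).2
  have hs := hpos t le_rfl
  refine ⟨t, by omega, (walk ξ t ω).toNat, mem_Ioo.2 ⟨by omega, by omega⟩, ⟨?_, ?_⟩, ?_⟩
  · simp only [Set.mem_iInter, Set.mem_preimage, Set.mem_Ioo]
    exact fun u hu => ⟨hpos u (mem_Icc.1 hu).2,
      (hbefore u (mem_Icc.1 hu).1 (by have := (mem_Icc.1 hu).2; omega)).2⟩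
  · simp only [Set.mem_preimage, Set.mem_singleton_iff]
    omega
  · simp only [Set.mem_preimage, Set.mem_Ici]
    omega

theorem setOf_le_stoppedWalk_eq_biUnion (hH : 2 ≤ H) :
    {ω | (H : ℤ) ≤ stoppedWalk ξ H ω} =
      ⋃ p ∈ range (H ^ 2) ×ˢ Ioo 0 H, overshootEvent ξ H p.1 p.2 := by
  ext ω
  simp only [Set.mem_ofPred_eq, Set.mem_iUnion, mem_product, mem_range, exists_prop, Prod.exists]
  constructor
  · intro hX
    obtain ⟨t, ht, s, hs, hω⟩ := exists_mem_overshootEvent hH hX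
    exact ⟨t, s, ⟨ht, hs⟩, hω⟩
  · rintro ⟨t, s, ⟨ht, -⟩, hω⟩
    rw [stoppedWalk, hitTime_eq_of_mem_overshootEvent hω, min_eq_left (by omega),
      walk_succ_of_mem_overshootEvent hω]
    have := hω.2
    simp only [Set.mem_preimage, Set.mem_Ici] at this
    omega

theorem measurableSet_le_stoppedWalk [MeasurableSpace Ω] (hmeas : ∀ i, Measurable (ξ i))
    (hH : 2 ≤ H) :
    MeasurableSet {ω | (H : ℤ) ≤ stoppedWalk ξ H ω} := by
  rw [setOf_le_stoppedWalk_eq_biUnion hH]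
  exact Finset.measurableSet_biUnion _ fun _ _ => measurableSet_overshootEvent hmeas

end Walk

section StoppedWalk

variable {Ω : Type*} [MeasurableSpace Ω] {μ : Measure Ω} {n : ℕ} {ξ : ℕ → Ω → ℕ} {H : ℕ} {c : ℝ}

theorem setLIntegral_exp_walk_overshootEvent_le (hmeas : ∀ i, Measurable (ξ i))
    (hdist : ∀ i, μ.map (ξ i) = binomialMeasure n (1 / (n : ℝ))) (hindep : iIndepFun ξ μ)
    {t s : ℕ} (hs : s < H) (hc0 : 0 ≤ c) (hc1 : c ≤ 1) :
    ∫⁻ ω in overshootEvent ξ H t s, ENNReal.ofReal (Real.exp (c * walk ξ (t + 1) ω)) ∂μ ≤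
      ENNReal.ofReal (Real.exp (c * (H + 1))) * μ (overshootEvent ξ H t s) := by
  have hG : MeasurableSet[⨆ i ∈ Set.Iic t, MeasurableSpace.comap (ξ i) inferInstance]
      (survivesAt ξ H t s) :=
    measurableSet_survivesAt (m := ⨆ i ∈ Set.Iic t, MeasurableSpace.comap (ξ i) inferInstance)
      fun i hi => Measurable.of_comap_le <|
      le_iSup₂ (f := fun i (_ : i ∈ Set.Iic t) => MeasurableSpace.comap (ξ i) inferInstance) i hi
  have hj : t + 1 ∉ Set.Iic t := by simp
  have hp1 : 1 / (n : ℝ) ≤ 1 := by rw [one_div]; exact Nat.cast_inv_le_one n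
  have hnp : (n : ℝ) * (1 / n) ≤ 1 := by rw [mul_one_div]; exact div_self_le_one _
  have ha : 2 ≤ H + 1 - s := by omega
  have hmass : μ (overshootEvent ξ H t s) =
      μ (survivesAt ξ H t s) * binomialMeasure n (1 / n) (Set.Ici (H + 1 - s)) := by
    have := setLIntegral_inter_preimage_eq_mul_of_iIndepFun hmeas hindep hj hG
      (measurableSet_Ici (a := H + 1 - s)) (measurable_const (a := (1 : ℝ≥0∞)))
    rwa [setLIntegral_one, setLIntegral_one, hdist] at this
  have hexp : (s - 1 : ℝ) + (((H + 1 - s : ℕ) : ℝ) + 1) = H + 1 := by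
    rw [Nat.cast_sub (by omega)]; push_cast; ring
  calc ∫⁻ ω in overshootEvent ξ H t s, ENNReal.ofReal (Real.exp (c * walk ξ (t + 1) ω)) ∂μ
      = ∫⁻ ω in overshootEvent ξ H t s, ENNReal.ofReal (Real.exp (c * (s - 1))) *
          ENNReal.ofReal (Real.exp (c * ξ (t + 1) ω)) ∂μ := by
        refine setLIntegral_congr_fun (measurableSet_overshootEvent hmeas) fun ω hω => ?_
        rw [walk_succ_of_mem_overshootEvent hω, ← ENNReal.ofReal_mul (Real.exp_pos _).le,
          ← Real.exp_add]
        push_cast; ring_nf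
    _ = μ (survivesAt ξ H t s) * (ENNReal.ofReal (Real.exp (c * (s - 1))) *
          ∫⁻ k in Set.Ici (H + 1 - s), ENNReal.ofReal (Real.exp (c * k))
            ∂binomialMeasure n (1 / n)) := by
        rw [← lintegral_const_mul _ (measurable_of_countable _), ← hdist (t + 1)]
        exact setLIntegral_inter_preimage_eq_mul_of_iIndepFun hmeas hindep hj hG measurableSet_Ici
          (measurable_of_countable fun k : ℕ => ENNReal.ofReal (Real.exp (c * (s - 1))) *
            ENNReal.ofReal (Real.exp (c * k)))
    _ ≤ μ (survivesAt ξ H t s) * (ENNReal.ofReal (Real.exp (c * (s - 1))) *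
          (ENNReal.ofReal (Real.exp (c * ((H + 1 - s : ℕ) + 1)))
            * binomialMeasure n (1 / n) (Set.Ici (H + 1 - s)))) := by
        gcongr
        exact setLIntegral_exp_binomialMeasure_Ici_le (by positivity) hp1 hnp ha hc0 hc1
    _ = ENNReal.ofReal (Real.exp (c * (H + 1))) * μ (overshootEvent ξ H t s) := by
        rw [hmass, ← mul_assoc (ENNReal.ofReal _), ← ENNReal.ofReal_mul (Real.exp_pos _).le,
          ← Real.exp_add, ← mul_add, hexp]
        ring

theorem setLIntegral_exp_stoppedWalk_le (hmeas : ∀ i, Measurable (ξ i))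
    (hdist : ∀ i, μ.map (ξ i) = binomialMeasure n (1 / (n : ℝ))) (hindep : iIndepFun ξ μ)
    (hH : 2 ≤ H) (hc0 : 0 ≤ c) (hc1 : c ≤ 1) :
    ∫⁻ ω in {ω | (H : ℤ) ≤ stoppedWalk ξ H ω},
        ENNReal.ofReal (Real.exp (c * stoppedWalk ξ H ω)) ∂μ ≤
      ENNReal.ofReal (Real.exp (c * (H + 1))) * μ {ω | (H : ℤ) ≤ stoppedWalk ξ H ω} := by
  have hdisj := pairwise_disjoint_overshootEvent (ξ := ξ) (H := H) |>.set_pairwise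
    (range (H ^ 2) ×ˢ Ioo 0 H : Finset (ℕ × ℕ))
  have hm : ∀ p ∈ range (H ^ 2) ×ˢ Ioo 0 H, MeasurableSet (overshootEvent ξ H p.1 p.2) :=
    fun p _ => measurableSet_overshootEvent hmeas
  rw [setOf_le_stoppedWalk_eq_biUnion hH, lintegral_biUnion_finset hdisj hm,
    measure_biUnion_finset hdisj hm, mul_sum]
  refine sum_le_sum fun p hp => ?_
  rw [mem_product, mem_range, mem_Ioo] at hp
  rw [setLIntegral_congr_fun (hm p (by simp_all)) fun ω hω => by
    rw [stoppedWalk, hitTime_eq_of_mem_overshootEvent hω, min_eq_left (by omega : p.1 + 1 ≤ H ^ 2)]]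
  exact setLIntegral_exp_walk_overshootEvent_le hmeas hdist hindep hp.2.2 hc0 hc1

end StoppedWalk

theorem exp_moment_stopped_walk_general {Ω : Type*} [MeasurableSpace Ω] (μ : Measure Ω)
    (n : ℕ)
    (ξ : ℕ → Ω → ℕ) (hmeas : ∀ i, Measurable (ξ i))
    (hdist : ∀ i, μ.map (ξ i) = binomialMeasure n (1 / (n : ℝ)))
    (hindep : iIndepFun ξ μ)
    (H : ℕ) (hH2 : 2 ≤ H)
    (c : ℝ) (hc0 : 0 < c) (hc1 : c < 1) :
    ∫ ω, Real.exp (c * ((walk ξ (min (hitTime ξ H ω) (H ^ 2)) ω : ℤ) : ℝ))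
        ∂(μ[|{ω | 0 < walk ξ (min (hitTime ξ H ω) (H ^ 2)) ω}]) ≤
      Real.exp (c * (H : ℝ) + c + c ^ 2) := by
  set B := {ω | (H : ℤ) ≤ stoppedWalk ξ H ω}
  have hB : MeasurableSet B := measurableSet_le_stoppedWalk hmeas hH2
  have hBA : {ω | 0 < walk ξ (min (hitTime ξ H ω) (H ^ 2)) ω} ∩ B = B :=
    Set.inter_eq_right.2 fun ω (hω : (H : ℤ) ≤ stoppedWalk ξ H ω) =>
      show 0 < stoppedWalk ξ H ω by omega
  refine integral_cond_le_of_setLIntegral_le (fun ω => (Real.exp_pos _).le) (Real.exp_pos _).le ?_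
  rw [← lintegral_inter_add_sdiff _ _ hB, ← measure_inter_add_sdiff _ hB, mul_add, hBA]
  refine add_le_add ?_ ?_
  · refine (setLIntegral_exp_stoppedWalk_le hmeas hdist hindep hH2 hc0.le hc1.le).trans ?_
    gcongr
    nlinarith
  · refine (setLIntegral_mono measurable_const fun ω hω => ENNReal.ofReal_le_ofReal
      (Real.exp_le_exp.2 ?_)).trans (setLIntegral_const _ _).le
    have : (stoppedWalk ξ H ω : ℝ) ≤ H := by exact_mod_cast (lt_of_not_ge hω.2).le
    change c * (stoppedWalk ξ H ω : ℝ) ≤ _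
    nlinarith

/-- **Inequality before (8), Nachmias–Peres.** For the Bin(n,1/n) walk, `2 ≤ H ≤ n-3`,
`γ* = γ ∧ H²` and `c ∈ (0,1)`, `E[e^{c S_{γ*}} | S_{γ*} > 0] ≤ exp(cH + c + c²)`. -/
theorem exp_moment_stopped_walk {Ω : Type*} [MeasurableSpace Ω] (μ : Measure Ω)
    [IsProbabilityMeasure μ] (n : ℕ) (hn : 2 ≤ n)
    (ξ : ℕ → Ω → ℕ) (hmeas : ∀ i, Measurable (ξ i))
    (hdist : ∀ i, μ.map (ξ i) = binomialMeasure n (1 / (n : ℝ)))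
    (hindep : iIndepFun ξ μ)
    (H : ℕ) (hH2 : 2 ≤ H) (hHn : (H : ℤ) ≤ (n : ℤ) - 3)
    (c : ℝ) (hc0 : 0 < c) (hc1 : c < 1) :
    ∫ ω, Real.exp (c * ((walk ξ (min (hitTime ξ H ω) (H ^ 2)) ω : ℤ) : ℝ))
        ∂(μ[|{ω | 0 < walk ξ (min (hitTime ξ H ω) (H ^ 2)) ω}]) ≤
      Real.exp (c * (H : ℝ) + c + c ^ 2) :=
  exp_moment_stopped_walk_general μ n ξ hmeas hdist hindep H hH2 c hc0 hc1
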